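/- For every integer r ≥ 2, the following identity holds in ℋ: ⧈(a b^{r−1}) = 2 a^{r−1}(a+b) + Σ_{j=1}^{r−2} a^{j}(a+b)^{r−j}, where juxtaposition and powers denote concatenation (so a^{j} is the j-fold concatenation of a, and (a+b)^{m} is the m-fold concatenation power of a+b expanded multilinearly, i.e. the sum of all words of length m). -/

import Mathlib

inductive Letter | a | b
deriving DecidableEq

abbrev Word := List Letter

/-- The algebra `ℋ`: formal `ℚ`-linear combinations of words. -/
abbrev H := Word →₀ ℚ

/-- The list of shuffles of two words (with multiplicity). -/
def shuffleList : Word → Word → List Word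
  | [], v => [v]
  | u, [] => [u]
  | x :: u, y :: v =>
      ((shuffleList u (y :: v)).map fun t => x :: t) ++
      ((shuffleList (x :: u) v).map fun t => y :: t)
termination_by u v => u.length + v.length
decreasing_by all_goals simp

/-- The shuffle product `u * v` of two words, as an element of `ℋ`. -/
noncomputable def shW (u v : Word) : H :=
  ((shuffleList u v).map fun t => Finsupp.single t (1 : ℚ)).sum

/-- The shuffle product of a word with an element of `ℋ`, extended linearly. -/
noncomputable def shWH (u : Word) (g : H) : H := g.sum fun v cv => cv • shW u v

/-- Concatenation of a word with an element of `ℋ`, extended linearly. -/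
noncomputable def concatWH (u : Word) (g : H) : H :=
  g.sum fun v c => Finsupp.single (u ++ v) c

/-- The list of all words of length `m`. -/
def wordsOfLength : ℕ → List Word
  | 0 => [[]]
  | n + 1 =>
      ((wordsOfLength n).map fun t => Letter.a :: t) ++
      ((wordsOfLength n).map fun t => Letter.b :: t)

/-- `(a+b)^m`, the `m`-fold concatenation power of `a+b` expanded multilinearly:
the sum of all words of length `m`. -/
noncomputable def abPow (m : ℕ) : H :=
  ((wordsOfLength m).map fun t => Finsupp.single t (1 : ℚ)).sum

/-- `(b-a)^m`, the `m`-fold concatenation power of `b-a` expanded multilinearly: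
the signed sum of all words of length `m`. -/
noncomputable def bmaPow (m : ℕ) : H :=
  ((wordsOfLength m).map fun t =>
    Finsupp.single t ((-1 : ℚ) ^ t.count Letter.a)).sum

def sigmaL : Letter → Letter
  | .a => .b
  | .b => .a

/-- `σ(c₁⋯c_n) = σ(c_n)⋯σ(c₁)` with `σ(a)=b`, `σ(b)=a`. -/
def sigmaW (w : Word) : Word := (w.map sigmaL).reverse

/-- The operator `⧈` : `⧈(c₁⋯c_n) = Σ_{i=0}^{n} (c₁⋯c_i) * σ(c_{i+1}⋯c_n)`. -/
noncomputable def box (w : Word) : H :=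
  ∑ i ∈ Finset.range (w.length + 1), shW (w.take i) (sigmaW (w.drop i))

/-!
The cut before the first letter of `a b^k` contributes `σ(a b^k) = a^k b`; cutting after the
`(i+1)`-st letter gives `(a b^i) * a^(k-i)`. A shuffle of `a b^i` with `a^(k-i)` starts with a
block `a^(t+1)` followed by a shuffle `b^i * a^s` with `s + t = k - i`. Collecting the terms by
`t`, the shuffles `b^i * a^s` with `i + s = k - t` add up to all words of that length, i.e. to
`(a+b)^(k-t)`. So `⧈(a b^k) = a^k b + Σ_{t+L=k} a^(t+1) (a+b)^L`, and the two terms `t = k, k-1`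
together with `a^k b` make up `2 a^k (a+b)`.
-/

open Finset Letter

theorem Finset.Nat.sum_antidiagonal_antidiagonal_rotate {M : Type*} [AddCommMonoid M] (n : ℕ)
    (f : ℕ → ℕ → ℕ → M) :
    ∑ p ∈ antidiagonal n, ∑ q ∈ antidiagonal p.2, f p.1 q.1 q.2 =
      ∑ p ∈ antidiagonal n, ∑ q ∈ antidiagonal p.2, f q.1 q.2 p.1 := by
  rw [sum_sigma', sum_sigma']
  refine sum_nbij' (fun x ↦ ⟨(x.2.2, x.1.1 + x.2.1), (x.1.1, x.2.1)⟩)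
    (fun x ↦ ⟨(x.2.1, x.2.2 + x.1.1), (x.2.2, x.1.1)⟩) ?_ ?_ ?_ ?_ fun _ _ ↦ rfl <;>
  simp only [mem_sigma, HasAntidiagonal.mem_antidiagonal, Sigma.forall, Prod.forall] <;>
  intros <;> simp_all <;> omega

theorem concatWH_eq_mapDomain (u : Word) (g : H) :
    concatWH u g = Finsupp.mapDomain (u ++ ·) g := rfl

theorem concatWH_add (u : Word) (f g : H) :
    concatWH u (f + g) = concatWH u f + concatWH u g :=
  Finsupp.mapDomain_add

theorem concatWH_sum {ι : Type*} (u : Word) (s : Finset ι) (f : ι → H) :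
    concatWH u (∑ x ∈ s, f x) = ∑ x ∈ s, concatWH u (f x) :=
  Finsupp.mapDomain_finsetSum

theorem concatWH_single (u v : Word) (c : ℚ) :
    concatWH u (Finsupp.single v c) = Finsupp.single (u ++ v) c :=
  Finsupp.mapDomain_single

theorem concatWH_concatWH (u v : Word) (g : H) :
    concatWH u (concatWH v g) = concatWH (u ++ v) g := by
  simp only [concatWH_eq_mapDomain, ← Finsupp.mapDomain_comp]
  congr 1
  ext w
  simp

theorem shW_nil_left (v : Word) : shW [] v = Finsupp.single v 1 := by
  simp [shW, shuffleList]

theorem shW_nil_right (u : Word) : shW u [] = Finsupp.single u 1 := by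
  cases u <;> simp [shW, shuffleList]

theorem shW_cons_cons (x y : Letter) (u v : Word) :
    shW (x :: u) (y :: v) = concatWH [x] (shW u (y :: v)) + concatWH [y] (shW (x :: u) v) := by
  simp only [shW, shuffleList, List.map_append, List.sum_append, concatWH_eq_mapDomain,
    ← Finsupp.mapDomain.addMonoidHom_apply, map_list_sum, List.map_map]
  simp [Function.comp_def, Finsupp.mapDomain_single]

theorem abPow_zero : abPow 0 = Finsupp.single [] 1 := by
  simp [abPow, wordsOfLength]

theorem abPow_succ (n : ℕ) :
    abPow (n + 1) = concatWH [a] (abPow n) + concatWH [b] (abPow n) := by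
  simp only [abPow, wordsOfLength, List.map_append, List.sum_append, concatWH_eq_mapDomain,
    ← Finsupp.mapDomain.addMonoidHom_apply, map_list_sum, List.map_map]
  simp [Function.comp_def, Finsupp.mapDomain_single]

theorem concatWH_abPow_one (u : Word) :
    concatWH u (abPow 1) = Finsupp.single (u ++ [a]) 1 + Finsupp.single (u ++ [b]) 1 := by
  simp [abPow_succ, abPow_zero, concatWH_single, concatWH_add]

theorem shW_cons_replicate_self (x : Letter) (u : Word) (n : ℕ) :
    shW (x :: u) (List.replicate n x) =
      ∑ p ∈ antidiagonal n,
        concatWH (List.replicate (p.2 + 1) x) (shW u (List.replicate p.1 x)) := by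
  induction n with
  | zero => simp [shW_nil_right, concatWH_single]
  | succ n ih =>
    rw [List.replicate_succ, shW_cons_cons, ← List.replicate_succ, ih, concatWH_sum,
      Nat.sum_antidiagonal_succ']
    simp only [concatWH_concatWH, List.singleton_append, ← List.replicate_succ, zero_add,
      List.replicate_one]

theorem sum_antidiagonal_shW_replicate (n : ℕ) :
    ∑ p ∈ antidiagonal n, shW (List.replicate p.1 b) (List.replicate p.2 a) = abPow n := by
  induction n with
  | zero => simp [abPow_zero, shW_nil_left]
  | succ n ih =>
    have first_letter : ∀ p ∈ antidiagonal (n + 1),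
        shW (List.replicate p.1 b) (List.replicate p.2 a) =
          (if p.1 = 0 then 0
            else concatWH [b] (shW (List.replicate (p.1 - 1) b) (List.replicate p.2 a))) +
          (if p.2 = 0 then 0
            else concatWH [a] (shW (List.replicate p.1 b) (List.replicate (p.2 - 1) a))) := by
      rintro ⟨_ | m, _ | k⟩ hp
      · simp at hp
      · simp [shW_nil_left, List.replicate_succ, concatWH_single]
      · simp [shW_nil_right, List.replicate_succ, concatWH_single]
      · simpa [List.replicate_succ] using
          shW_cons_cons b a (List.replicate m b) (List.replicate k a)
    rw [sum_congr rfl first_letter, sum_add_distrib, Nat.sum_antidiagonal_succ,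
      Nat.sum_antidiagonal_succ']
    simp only [if_pos, Nat.add_one_ne_zero, reduceIte, Nat.add_one_sub_one, zero_add,
      ← concatWH_sum, ih, abPow_succ]
    exact add_comm _ _

theorem box_a_replicate_b_eq_sum_shW (k : ℕ) :
    box (a :: List.replicate k b) = Finsupp.single (List.replicate k a ++ [b]) 1 +
      ∑ p ∈ antidiagonal k, shW (a :: List.replicate p.1 b) (List.replicate p.2 a) := by
  unfold _root_.box
  rw [List.length_cons, List.length_replicate, sum_range_succ',
    Nat.sum_antidiagonal_eq_sum_range_succ_mk, add_comm]
  congr 1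
  · simp [shW_nil_left, sigmaW, sigmaL]
  · refine sum_congr rfl fun i hi ↦ ?_
    have hik : i ≤ k := Nat.lt_succ_iff.mp (mem_range.mp hi)
    simp [List.take_replicate, List.drop_replicate, sigmaW, sigmaL, hik]

theorem box_a_replicate_b (k : ℕ) :
    box (a :: List.replicate k b) = Finsupp.single (List.replicate k a ++ [b]) 1 +
      ∑ p ∈ antidiagonal k, concatWH (List.replicate (p.1 + 1) a) (abPow p.2) := by
  rw [box_a_replicate_b_eq_sum_shW]
  congr 1
  simp only [shW_cons_replicate_self, ← sum_antidiagonal_shW_replicate, concatWH_sum]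
  exact Nat.sum_antidiagonal_antidiagonal_rotate k fun i s t ↦
    concatWH (List.replicate (t + 1) a) (shW (List.replicate i b) (List.replicate s a))

/-- For `r ≥ 2`: `⧈(a b^{r-1}) = 2 a^{r-1}(a+b) + Σ_{j=1}^{r-2} a^j (a+b)^{r-j}`,
products on the right-hand side being concatenation. -/
theorem statement6 (r : ℕ) (hr : 2 ≤ r) :
    box (Letter.a :: List.replicate (r - 1) Letter.b) =
      (2 : ℚ) • concatWH (List.replicate (r - 1) Letter.a) (abPow 1) +
      ∑ j ∈ Finset.Icc 1 (r - 2), concatWH (List.replicate j Letter.a) (abPow (r - j)) := by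
  obtain ⟨q, rfl⟩ : ∃ q, r = q + 2 := ⟨r - 2, by omega⟩
  have reindex : ∑ j ∈ Icc 1 q, concatWH (List.replicate j a) (abPow (q + 2 - j)) =
      ∑ i ∈ range q, concatWH (List.replicate (i + 1) a) (abPow (q + 1 - i)) := by
    rw [← Ico_add_one_right_eq_Icc, sum_Ico_eq_sum_range]
    refine sum_congr rfl fun i _ ↦ ?_
    rw [add_comm 1 i, show q + 2 - (i + 1) = q + 1 - i by omega]
  have top : concatWH (List.replicate (q + 1) a) (abPow 1) =
      Finsupp.single (List.replicate (q + 1 + 1) a) 1 +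
        Finsupp.single (List.replicate (q + 1) a ++ [b]) 1 := by
    rw [concatWH_abPow_one, ← List.replicate_succ']
  rw [show q + 2 - 1 = q + 1 from rfl, show q + 2 - 2 = q from rfl, box_a_replicate_b,
    reindex, Nat.sum_antidiagonal_eq_sum_range_succ_mk, sum_range_succ, sum_range_succ]
  dsimp only
  rw [Nat.add_sub_cancel_left, Nat.sub_self, abPow_zero, concatWH_single, List.append_nil, top,
    two_smul]
  abel
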